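/- (Neyman–Pearson for anisotropic Gaussians, part 2) Let x, μ, δ ∈ ℝ^d and σ₁,…,σ_d > 0. Let X be a random vector whose i-th coordinate is an independent Gaussian N(x_i + μ_i, σ_i²) and Y a random vector whose i-th coordinate is an independent Gaussian N(x_i + μ_i + δ_i, σ_i²). Let h : ℝ^d → {0,1} be any deterministic measurable function. If S = { z ∈ ℝ^d : Σ_{i=1}^d (δ_i/σ_i²)·z_i ≥ β } for some β ∈ ℝ and P(h(X)=1) ≤ P(X ∈ S), then P(h(Y)=1) ≤ P(Y ∈ S). -/

import Mathlib

/-!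
Since the coordinates are independent and each Gaussian shift has likelihood ratio
`exp (δ / v * (w - (m + δ / 2)))`, the law of `Y` has density
`exp (∑ i, δ i / σ i ^ 2 * z i - C)` with respect to the law of `X`, for a constant `C`.
This density is an increasing function of the statistic defining `S`, so `S` is a superlevel set
of the likelihood ratio and the Neyman–Pearson argument applies: with `H = {h = true}`, the
density is at most a threshold `t` on `H \ S` and at least `t` on `S \ H`, while
`μX (H \ S) ≤ μX (S \ H)`.
-/

open MeasureTheory ProbabilityTheory Real
open scoped ENNReal NNReal

section Pi

variable {ι : Type*} [Fintype ι] {Ω : ι → Type*} [∀ i, MeasurableSpace (Ω i)]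
  {μ : (i : ι) → Measure (Ω i)} [∀ i, IsProbabilityMeasure (μ i)]

theorem lintegral_pi_prod_eq_prod {f : ∀ i, Ω i → ℝ≥0∞} (hf : ∀ i, Measurable (f i)) :
    ∫⁻ ω, ∏ i, f i (ω i) ∂Measure.pi μ = ∏ i, ∫⁻ x, f i x ∂μ i := by
  rw [lintegral_prod_eq_prod_lintegral_of_indepFun _ _
    (iIndepFun_pi fun i ↦ (hf i).aemeasurable) fun i ↦ (hf i).comp (measurable_pi_apply i)]
  exact Finset.prod_congr rfl fun i _ ↦ (measurePreserving_eval μ i).lintegral_comp (hf i)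

theorem pi_withDensity {f : ∀ i, Ω i → ℝ≥0∞} (hf : ∀ i, Measurable (f i))
    [∀ i, SigmaFinite ((μ i).withDensity (f i))] :
    Measure.pi (fun i ↦ (μ i).withDensity (f i)) =
      (Measure.pi μ).withDensity fun ω ↦ ∏ i, f i (ω i) := by
  refine Measure.pi_eq fun s hs ↦ ?_
  have hbox : (Set.univ.pi s).indicator (fun ω ↦ ∏ i, f i (ω i)) =
      fun ω ↦ ∏ i, (s i).indicator (f i) (ω i) := by
    ext ω
    by_cases hω : ω ∈ Set.univ.pi s
    · rw [Set.indicator_of_mem hω]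
      exact Finset.prod_congr rfl fun i _ ↦ (Set.indicator_of_mem (hω i trivial) _).symm
    · obtain ⟨i, -, hi⟩ := not_forall₂.1 hω
      rw [Set.indicator_of_notMem hω, Finset.prod_eq_zero (Finset.mem_univ i)
        (Set.indicator_of_notMem hi _)]
  rw [withDensity_apply _ (.univ_pi hs), ← lintegral_indicator (.univ_pi hs), hbox,
    lintegral_pi_prod_eq_prod fun i ↦ (hf i).indicator (hs i)]
  simp_rw [lintegral_indicator (hs _), withDensity_apply _ (hs _)]

end Pi

theorem gaussianPDFReal_add_eq_exp_mul (m δ : ℝ) {v : ℝ≥0} (hv : v ≠ 0) (w : ℝ) :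
    gaussianPDFReal (m + δ) v w =
      exp (δ / v * (w - (m + δ / 2))) * gaussianPDFReal m v w := by
  have hv : (v : ℝ) ≠ 0 := by exact_mod_cast hv
  rw [gaussianPDFReal, gaussianPDFReal, mul_left_comm, ← exp_add]
  congr 2
  field_simp
  ring

theorem gaussianReal_add_eq_withDensity (m δ : ℝ) {v : ℝ≥0} (hv : v ≠ 0) :
    gaussianReal (m + δ) v =
      (gaussianReal m v).withDensity fun w ↦ ENNReal.ofReal (exp (δ / v * (w - (m + δ / 2)))) := by
  have hdens : gaussianPDF (m + δ) v =
      gaussianPDF m v * fun w ↦ ENNReal.ofReal (exp (δ / v * (w - (m + δ / 2)))) := by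
    ext w
    simp only [gaussianPDF, Pi.mul_apply, gaussianPDFReal_add_eq_exp_mul m δ hv w,
      ← ENNReal.ofReal_mul (gaussianPDFReal_nonneg _ _ _), mul_comm]
  rw [gaussianReal_of_var_ne_zero _ hv, gaussianReal_of_var_ne_zero _ hv, hdens,
    withDensity_mul _ (measurable_gaussianPDF _ _) (by fun_prop)]

theorem pi_gaussianReal_add_eq_withDensity {ι : Type*} [Fintype ι] (m δ : ι → ℝ) {v : ι → ℝ≥0}
    (hv : ∀ i, v i ≠ 0) :
    Measure.pi (fun i ↦ gaussianReal (m i + δ i) (v i)) =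
      (Measure.pi fun i ↦ gaussianReal (m i) (v i)).withDensity
        fun z ↦ ENNReal.ofReal (exp (∑ i, δ i / v i * (z i - (m i + δ i / 2)))) := by
  simp_rw [gaussianReal_add_eq_withDensity _ _ (hv _)]
  rw [pi_withDensity fun i ↦ by fun_prop]
  simp_rw [exp_sum, ENNReal.ofReal_prod_of_nonneg fun i _ ↦ (exp_pos _).le]

theorem withDensity_apply_le_of_threshold {α : Type*} [MeasurableSpace α] {μ : Measure α}
    [IsFiniteMeasure μ] {L : α → ℝ≥0∞} {S H : Set α} (hS : MeasurableSet S)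
    (hH : MeasurableSet H) {t : ℝ≥0∞} (hLS : ∀ x ∈ S, t ≤ L x) (hLSc : ∀ x ∉ S, L x ≤ t)
    (hle : μ H ≤ μ S) :
    μ.withDensity L H ≤ μ.withDensity L S := by
  have hdiff : μ (H \ S) ≤ μ (S \ H) := by
    rw [← measure_inter_add_sdiff H hS, ← measure_inter_add_sdiff S hH, Set.inter_comm] at hle
    exact (ENNReal.add_le_add_iff_left (measure_ne_top μ _)).1 hle
  have hdiff_withDensity : μ.withDensity L (H \ S) ≤ μ.withDensity L (S \ H) := calc
    μ.withDensity L (H \ S) ≤ ∫⁻ _ in H \ S, t ∂μ := by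
      rw [withDensity_apply _ (hH.diff hS)]
      exact setLIntegral_mono' (hH.diff hS) fun x hx ↦ hLSc x hx.2
    _ = t * μ (H \ S) := setLIntegral_const _ _
    _ ≤ t * μ (S \ H) := by gcongr
    _ = ∫⁻ _ in S \ H, t ∂μ := (setLIntegral_const _ _).symm
    _ ≤ μ.withDensity L (S \ H) := by
      rw [withDensity_apply _ (hS.diff hH)]
      exact setLIntegral_mono' (hS.diff hH) fun x hx ↦ hLS x hx.1
  rw [← measure_inter_add_sdiff H hS, ← measure_inter_add_sdiff S hH, Set.inter_comm]
  gcongr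

/-- Neyman–Pearson for anisotropic Gaussians, part 2. -/
theorem neyman_pearson_gaussian_two
    {d : ℕ} (x μ δ : Fin d → ℝ) (σ : Fin d → ℝ) (hσ : ∀ i, 0 < σ i)
    (μX μY : Measure (Fin d → ℝ))
    (hμX : μX = Measure.pi fun i : Fin d => gaussianReal (x i + μ i) ((σ i ^ 2).toNNReal))
    (hμY : μY = Measure.pi fun i : Fin d => gaussianReal (x i + μ i + δ i) ((σ i ^ 2).toNNReal))
    (h : (Fin d → ℝ) → Bool) (hh : Measurable h)
    (β : ℝ) (S : Set (Fin d → ℝ))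
    (hS : S = {z | ∑ i, δ i / σ i ^ 2 * z i ≥ β})
    (hcond : μX {z | h z = true} ≤ μX S) :
    μY {z | h z = true} ≤ μY S := by
  subst hS
  have hv : ∀ i, (σ i ^ 2).toNNReal ≠ 0 := fun i ↦ by simpa using (hσ i).ne'
  have hY : μY = μX.withDensity fun z ↦ ENNReal.ofReal (exp (∑ i, δ i / (σ i ^ 2).toNNReal *
      (z i - (x i + μ i + δ i / 2)))) := by
    rw [hμY, hμX]
    exact pi_gaussianReal_add_eq_withDensity (fun i ↦ x i + μ i) δ hv
  set C := ∑ i, δ i / σ i ^ 2 * (x i + μ i + δ i / 2)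
  have hexp : ∀ z : Fin d → ℝ, ∑ i, δ i / (σ i ^ 2).toNNReal * (z i - (x i + μ i + δ i / 2)) =
      ∑ i, δ i / σ i ^ 2 * z i - C := fun z ↦ by
    simp only [Real.coe_toNNReal _ (sq_nonneg _), mul_sub, Finset.sum_sub_distrib, C]
  have : IsProbabilityMeasure μX := hμX ▸ inferInstance
  rw [hY]
  refine withDensity_apply_le_of_threshold (t := ENNReal.ofReal (exp (β - C)))
    (measurableSet_le measurable_const (by fun_prop)) (hh (measurableSet_singleton true))
    (fun z hz ↦ ?_) (fun z hz ↦ ?_) hcond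
  all_goals
    simp only [Set.mem_ofPred_eq, not_le] at hz
    gcongr
    linarith [hexp z]
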